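/- Let ε ∈ ℝ, Δτ > 0, and assume the linear instability condition: ε < 0 or ε > 2/(π(Δτ)²). Let θ ∈ ℝ with cos θ ≠ 0. Then for every a = (a₁, a₂) ∈ ℝ², ‖Ĵ(θ)·a‖² = ‖a‖² + A(θ)a₁² + B(θ)a₁a₂ + C(θ)a₂²; consequently, if a₁·a₂ > 0 then ‖Ĵ(θ)·a‖² ≥ (1 + min(A(θ), C(θ)))·‖a‖² > ‖a‖², i.e., vectors in the positive-slope cone are strictly stretched by the Jacobian of T̂_{ε,Δτ}. -/
import Mathlib


/-- The action of the Jacobian `Ĵ(θ)` of the map `T̂_{ε,Δτ}` on a vector of `ℝ²`. -/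
noncomputable def JhatApply (ε Δτ θ : ℝ) (a : ℝ × ℝ) : ℝ × ℝ :=
  ((1 - Real.pi * ε * Δτ ^ 2 / Real.cos θ ^ 2) * a.1
      + (-(2 * Real.pi * ε * Δτ) / Real.cos θ ^ 2) * a.2,
   Δτ * (1 - Real.pi * ε * Δτ ^ 2 / (2 * Real.cos θ ^ 2)) * a.1
      + (1 - Real.pi * ε * Δτ ^ 2 / Real.cos θ ^ 2) * a.2)

/-- The coefficient `A(θ)`. -/
noncomputable def Acoef (ε Δτ θ : ℝ) : ℝ :=
  (1 - Real.pi * ε * Δτ ^ 2 / Real.cos θ ^ 2) ^ 2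
    + Δτ ^ 2 * (1 - Real.pi * ε * Δτ ^ 2 / (2 * Real.cos θ ^ 2)) ^ 2 - 1

/-- The coefficient `B(θ)`. -/
noncomputable def Bcoef (ε Δτ θ : ℝ) : ℝ :=
  (1 - Real.pi * ε * Δτ ^ 2 / Real.cos θ ^ 2) *
    (-(4 * Real.pi * ε * Δτ) / Real.cos θ ^ 2
      + 2 * Δτ * (1 - Real.pi * ε * Δτ ^ 2 / (2 * Real.cos θ ^ 2)))

/-- The coefficient `C(θ)`. -/
noncomputable def Ccoef (ε Δτ θ : ℝ) : ℝ :=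
  4 * Real.pi ^ 2 * ε ^ 2 * Δτ ^ 2 / Real.cos θ ^ 4
    + (1 - Real.pi * ε * Δτ ^ 2 / Real.cos θ ^ 2) ^ 2 - 1

/-- Abstract sign facts for the coefficients, in terms of `m = πε/cos²θ`. -/
lemma key_signs (t m : ℝ) (ht : 0 < t) (h : m < 0 ∨ m * t ^ 2 > 2) :
    ((1 - m * t ^ 2) ^ 2 + t ^ 2 * (1 - m * t ^ 2 / 2) ^ 2 - 1 > 0) ∧
    (4 * m ^ 2 * t ^ 2 + (1 - m * t ^ 2) ^ 2 - 1 > 0) ∧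
    ((1 - m * t ^ 2) * (-(4 * m * t) + 2 * t * (1 - m * t ^ 2 / 2)) ≥ 0) := by
  have ht2 : 0 < t ^ 2 := by positivity
  rcases h with h | h
  · have hk : m * t ^ 2 < 0 := mul_neg_of_neg_of_pos h ht2
    refine ⟨?_, ?_, ?_⟩
    · nlinarith [sq_nonneg (m * t ^ 2), mul_nonneg ht2.le (sq_nonneg (1 - m * t ^ 2 / 2))]
    · nlinarith [sq_nonneg (m * t), sq_nonneg (m * t ^ 2)]
    · have h1 : 0 < 1 - m * t ^ 2 := by linarith
      have h2 : 0 < -(4 * m * t) + 2 * t * (1 - m * t ^ 2 / 2) := by nlinarith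
      exact le_of_lt (mul_pos h1 h2)
  · have hmpos : 0 < m := by nlinarith
    refine ⟨?_, ?_, ?_⟩
    · nlinarith [sq_nonneg (m * t ^ 2), mul_nonneg ht2.le (sq_nonneg (1 - m * t ^ 2 / 2))]
    · nlinarith [mul_pos (mul_pos hmpos hmpos) ht2, sq_nonneg (m * t ^ 2)]
    · have h1 : 1 - m * t ^ 2 < 0 := by linarith
      have h2 : -(4 * m * t) + 2 * t * (1 - m * t ^ 2 / 2) < 0 := by nlinarith
      exact le_of_lt (mul_pos_of_neg_of_neg h1 h2)

/-- Under the linear instability condition (with `Δτ > 0`), for every vector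
`a`, `‖Ĵ(θ)a‖² = ‖a‖² + A(θ)a₁² + B(θ)a₁a₂ + C(θ)a₂²`; consequently, vectors in
the positive-slope cone are strictly stretched:
`‖Ĵ(θ)a‖² ≥ (1 + min(A(θ),C(θ)))·‖a‖² > ‖a‖²`. -/
theorem Jhat_stretches_positive_cone (ε Δτ : ℝ) (hΔτ : Δτ > 0)
    (hli : ε < 0 ∨ ε > 2 / (Real.pi * Δτ ^ 2))
    (θ : ℝ) (hθ : Real.cos θ ≠ 0) :
    (∀ a : ℝ × ℝ,
        (JhatApply ε Δτ θ a).1 ^ 2 + (JhatApply ε Δτ θ a).2 ^ 2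
          = (a.1 ^ 2 + a.2 ^ 2) + Acoef ε Δτ θ * a.1 ^ 2
              + Bcoef ε Δτ θ * (a.1 * a.2) + Ccoef ε Δτ θ * a.2 ^ 2) ∧
    (∀ a : ℝ × ℝ, a.1 * a.2 > 0 →
        (JhatApply ε Δτ θ a).1 ^ 2 + (JhatApply ε Δτ θ a).2 ^ 2
            ≥ (1 + min (Acoef ε Δτ θ) (Ccoef ε Δτ θ)) * (a.1 ^ 2 + a.2 ^ 2) ∧
        (JhatApply ε Δτ θ a).1 ^ 2 + (JhatApply ε Δτ θ a).2 ^ 2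
            > a.1 ^ 2 + a.2 ^ 2) := by
  have hπ := Real.pi_pos
  have hc : (0:ℝ) < Real.cos θ ^ 2 := by positivity
  have hc1 : Real.cos θ ^ 2 ≤ 1 := by
    nlinarith [Real.cos_le_one θ, Real.neg_one_le_cos θ]
  set m : ℝ := Real.pi * ε / Real.cos θ ^ 2 with hm
  -- instability in terms of m
  have hinst : m < 0 ∨ m * Δτ ^ 2 > 2 := by
    rcases hli with h | h
    · left
      exact div_neg_of_neg_of_pos (by nlinarith) hc
    · right
      have hden : 0 < Real.pi * Δτ ^ 2 := by positivity
      have h2 : 2 < Real.pi * ε * Δτ ^ 2 := by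
        rw [gt_iff_lt, div_lt_iff₀ hden] at h
        nlinarith
      have h3 : Real.pi * ε * Δτ ^ 2 ≤ Real.pi * ε * Δτ ^ 2 / Real.cos θ ^ 2 := by
        rw [le_div_iff₀ hc]
        nlinarith
      have h4 : m * Δτ ^ 2 = Real.pi * ε * Δτ ^ 2 / Real.cos θ ^ 2 := by
        rw [hm]; ring
      rw [h4]; linarith
  -- rewriting the coefficients in terms of m
  have eqA : Acoef ε Δτ θ
      = (1 - m * Δτ ^ 2) ^ 2 + Δτ ^ 2 * (1 - m * Δτ ^ 2 / 2) ^ 2 - 1 := by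
    rw [Acoef, hm]; field_simp
  have eqB : Bcoef ε Δτ θ
      = (1 - m * Δτ ^ 2) * (-(4 * m * Δτ) + 2 * Δτ * (1 - m * Δτ ^ 2 / 2)) := by
    rw [Bcoef, hm]; field_simp
  have eqC : Ccoef ε Δτ θ
      = 4 * m ^ 2 * Δτ ^ 2 + (1 - m * Δτ ^ 2) ^ 2 - 1 := by
    rw [Ccoef, hm]; field_simp
  obtain ⟨hA, hC, hB⟩ := key_signs Δτ m hΔτ hinst
  rw [← eqA] at hA; rw [← eqC] at hC; rw [← eqB] at hB
  have hid : ∀ a : ℝ × ℝ,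
      (JhatApply ε Δτ θ a).1 ^ 2 + (JhatApply ε Δτ θ a).2 ^ 2
        = (a.1 ^ 2 + a.2 ^ 2) + Acoef ε Δτ θ * a.1 ^ 2
            + Bcoef ε Δτ θ * (a.1 * a.2) + Ccoef ε Δτ θ * a.2 ^ 2 := by
    intro a
    simp only [JhatApply, Acoef, Bcoef, Ccoef]
    ring
  refine ⟨hid, fun a ha => ?_⟩
  have hnorm : 0 < a.1 ^ 2 + a.2 ^ 2 := by nlinarith [sq_nonneg (a.1 - a.2)]
  have hmin : 0 < min (Acoef ε Δτ θ) (Ccoef ε Δτ θ) := lt_min hA hC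
  have hgoal1 : (JhatApply ε Δτ θ a).1 ^ 2 + (JhatApply ε Δτ θ a).2 ^ 2
      ≥ (1 + min (Acoef ε Δτ θ) (Ccoef ε Δτ θ)) * (a.1 ^ 2 + a.2 ^ 2) := by
    rw [hid a]
    have hle1 := min_le_left (Acoef ε Δτ θ) (Ccoef ε Δτ θ)
    have hle2 := min_le_right (Acoef ε Δτ θ) (Ccoef ε Δτ θ)
    nlinarith [mul_le_mul_of_nonneg_right hle1 (sq_nonneg a.1),
      mul_le_mul_of_nonneg_right hle2 (sq_nonneg a.2),
      mul_nonneg hB ha.le]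
  refine ⟨hgoal1, ?_⟩
  nlinarith [mul_pos hmin hnorm]
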